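/- arXiv:1802.09004 — 2 statements merged into one kernel-verified Lean document; each statement's English description precedes it below -/
import Mathlib

section
/- Let θ > p ≥ 1 be real numbers and L(s) = s⁴ − (16pθ(p+1)/(θ+1)) s² + (16pθ(p+1)(p+θ+2)/(θ+1)²) s − 16pθ(p+1)²/(θ+1)². Then L has a real root strictly greater than p+1; in particular its largest real root s₀ satisfies s₀ > p + 1. -/
open Filter Polynomial

lemma tendsto_quartic_atTop (a b c : ℝ) :
    Tendsto (fun s : ℝ => s ^ 4 - a * s ^ 2 + b * s - c) atTop atTop := by
  have hdeg : (X ^ 4 - C a * X ^ 2 + C b * X - C c : ℝ[X]).natDegree = 4 := by compute_degree!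
  have hlead : (X ^ 4 - C a * X ^ 2 + C b * X - C c : ℝ[X]).leadingCoeff = 1 := by monicity!
  have h := (X ^ 4 - C a * X ^ 2 + C b * X - C c : ℝ[X]).tendsto_atTop_of_leadingCoeff_nonneg
    (by rw [degree_eq_natDegree (ne_zero_of_natDegree_gt (n := 0) (by omega)), hdeg]; norm_num)
    (by rw [hlead]; norm_num)
  simpa using h

lemma exists_root_gt_of_neg_of_tendsto_atTop {f : ℝ → ℝ} (hf : Continuous f)
    (htop : Tendsto f atTop atTop) {a : ℝ} (ha : f a < 0) : ∃ s > a, f s = 0 := by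
  obtain ⟨s, hs, hfs⟩ := isPreconnected_Ici.intermediate_value_Ici (Set.mem_Ici.2 le_rfl)
    (le_principal_iff.2 (Ici_mem_atTop a)) hf.continuousOn htop ha.le
  exact ⟨s, lt_of_le_of_ne hs (by rintro rfl; linarith), hfs⟩

noncomputable def quarticL (p θ s : ℝ) : ℝ :=
  s ^ 4 - (16 * p * θ * (p + 1) / (θ + 1)) * s ^ 2
    + (16 * p * θ * (p + 1) * (p + θ + 2) / (θ + 1) ^ 2) * s
    - 16 * p * θ * (p + 1) ^ 2 / (θ + 1) ^ 2

/-- Using `p + θ + 2 = (p + 1) + (θ + 1)`, the value at `p + 1` factors as a difference of squares. -/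
lemma quarticL_succ (p θ : ℝ) (hθ : θ + 1 ≠ 0) :
    quarticL p θ (p + 1) = (p + 1) ^ 2 * ((p + 1) * (θ + 1) - 4 * p * θ)
      * ((p + 1) * (θ + 1) + 4 * p * θ) / (θ + 1) ^ 2 := by
  unfold quarticL
  field_simp
  ring

lemma quarticL_succ_neg {p θ : ℝ} (hp : 1 ≤ p) (hθ : p < θ) : quarticL p θ (p + 1) < 0 := by
  have hp0 : 0 < p := by linarith
  have hθ0 : 0 < θ := by linarith
  have hθ1 : 0 < θ + 1 := by linarith
  have hsmall : (p + 1) * (θ + 1) < 4 * p * θ := by nlinarith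
  rw [quarticL_succ p θ hθ1.ne']
  apply div_neg_of_neg_of_pos _ (by positivity)
  exact mul_neg_of_neg_of_pos (mul_neg_of_pos_of_neg (by positivity) (by linarith))
    (by positivity)

lemma continuous_quarticL (p θ : ℝ) : Continuous (quarticL p θ) := by
  unfold quarticL
  fun_prop

theorem stmt_5 (p θ : ℝ) (hp : 1 ≤ p) (hθ : p < θ)
    (L : ℝ → ℝ)
    (hL : ∀ s, L s = s ^ 4 - (16 * p * θ * (p + 1) / (θ + 1)) * s ^ 2
      + (16 * p * θ * (p + 1) * (p + θ + 2) / (θ + 1) ^ 2) * s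
      - 16 * p * θ * (p + 1) ^ 2 / (θ + 1) ^ 2) :
    (∃ s, s > p + 1 ∧ L s = 0) ∧
    (∀ s₀, IsGreatest {s : ℝ | L s = 0} s₀ → s₀ > p + 1) := by
  obtain rfl : L = quarticL p θ := funext hL
  obtain ⟨s, hs, hLs⟩ := exists_root_gt_of_neg_of_tendsto_atTop (continuous_quarticL p θ)
    (tendsto_quartic_atTop _ _ _) (quarticL_succ_neg hp hθ)
  exact ⟨⟨s, hs, hLs⟩, fun s₀ hs₀ => hs.trans_le (hs₀.2 hLs)⟩
end

section
/- Let Ω ⊆ ℝ^N be open, v, φ positive smooth functions on Ω with Δφ < 0, p > 0, and suppose θ u^{θ−1} φ = Δ((1/p) v^{1−p} Δφ) in Ω for a positive smooth u. Then for every γ ∈ C²_c(Ω): θ ∫_Ω u^{θ−1} γ² dx ≤ (1/p) ∫_Ω v^{1−p} (Δγ)² dx. -/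
open MeasureTheory

/-- The Laplacian of a scalar function on `ℝ^N`, as the sum of the second
partial derivatives in the coordinate directions. -/
noncomputable def lap {N : ℕ} (f : EuclideanSpace ℝ (Fin N) → ℝ)
    (x : EuclideanSpace ℝ (Fin N)) : ℝ :=
  ∑ i : Fin N,
    fderiv ℝ (fun y => fderiv ℝ f y (EuclideanSpace.single i 1)) x (EuclideanSpace.single i 1)

section Aux

open Filter Topology Set Manifold

variable {N : ℕ}
local notation "E" => EuclideanSpace ℝ (Fin N)

private lemma evzero {f : E → ℝ} {x : E} (hx : x ∉ tsupport f) : f =ᶠ[𝓝 x] 0 :=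
  notMem_tsupport_iff_eventuallyEq.mp hx

private lemma fderiv_apply_eq_zero_of_nmem {f : E → ℝ} {x : E} (hx : x ∉ tsupport f) (e : E) :
    fderiv ℝ f x e = 0 := by
  rw [(evzero hx).fderiv_eq]
  rw [show (0 : E → ℝ) = (fun _ => (0:ℝ)) from rfl, fderiv_const_apply]
  rfl

private lemma lap_congr {f g : E → ℝ} {x : E} (h : f =ᶠ[𝓝 x] g) : lap f x = lap g x := by
  unfold lap
  refine Finset.sum_congr rfl fun i _ => ?_
  have h1 : (fun y => fderiv ℝ f y (EuclideanSpace.single i 1)) =ᶠ[𝓝 x]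
      (fun y => fderiv ℝ g y (EuclideanSpace.single i 1)) :=
    (h.fderiv (𝕜 := ℝ)).mono fun y hy => by simp only [hy]
  rw [h1.fderiv_eq]

private lemma lap_eq_zero_of_nmem {f : E → ℝ} {x : E} (hx : x ∉ tsupport f) : lap f x = 0 := by
  rw [lap_congr (evzero hx)]
  unfold lap
  refine Finset.sum_eq_zero fun i _ => ?_
  rw [show (fun y => fderiv ℝ (0 : E → ℝ) y (EuclideanSpace.single i 1))
      = (fun _ => (0:ℝ)) from ?_, fderiv_const_apply]
  · rfl
  · funext y
    rw [show (0 : E → ℝ) = (fun _ => (0:ℝ)) from rfl, fderiv_const_apply]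
    rfl

private lemma contDiff_fderiv_apply {f : E → ℝ} {n : ℕ∞} (hf : ContDiff ℝ (n + 1) f) (e : E) :
    ContDiff ℝ n (fun y => fderiv ℝ f y e) :=
  (hf.fderiv_right le_rfl).clm_apply contDiff_const

private lemma contDiffOn_fderiv_apply {f : E → ℝ} {s : Set E} (hs : IsOpen s)
    (hf : ContDiffOn ℝ (⊤ : ℕ∞) f s) (e : E) : ContDiffOn ℝ (⊤ : ℕ∞) (fun y => fderiv ℝ f y e) s := by
  have h1 : ContDiffOn ℝ (⊤ : ℕ∞) (fun y => fderivWithin ℝ f s y) s :=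
    hf.fderivWithin hs.uniqueDiffOn (by simp)
  exact (h1.congr fun y hy => (fderivWithin_of_isOpen hs hy).symm).clm_apply contDiffOn_const

private lemma contDiffOn_lap {f : E → ℝ} {s : Set E} (hs : IsOpen s)
    (hf : ContDiffOn ℝ (⊤ : ℕ∞) f s) : ContDiffOn ℝ (⊤ : ℕ∞) (lap f) s := by
  unfold lap
  apply ContDiffOn.sum fun i _ => ?_
  exact contDiffOn_fderiv_apply hs (contDiffOn_fderiv_apply hs hf _) _

private lemma continuous_lap {f : E → ℝ} (hf : ContDiff ℝ 2 f) : Continuous (lap f) := by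
  unfold lap
  apply continuous_finset_sum _ fun i _ => ?_
  have h1 : ContDiff ℝ 1 (fun y => fderiv ℝ f y (EuclideanSpace.single i 1)) :=
    contDiff_fderiv_apply (n := 1) (hf.of_le (by norm_num)) _
  exact (contDiff_fderiv_apply (n := 0) (h1.of_le (by norm_num)) _).continuous

private lemma hcs_fderiv_apply {f : E → ℝ} (hf : HasCompactSupport f) (e : E) :
    HasCompactSupport (fun y => fderiv ℝ f y e) :=
  HasCompactSupport.intro hf fun x hx => fderiv_apply_eq_zero_of_nmem hx e

/-- Green's identity for compactly supported C² functions. -/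
private lemma green {f g : E → ℝ} (hf : ContDiff ℝ 2 f) (hg : ContDiff ℝ 2 g)
    (hcf : HasCompactSupport f) :
    ∫ x, f x * lap g x = ∫ x, lap f x * g x := by
  have hf1 : ∀ e : E, ContDiff ℝ 1 (fun y => fderiv ℝ f y e) := fun e =>
    contDiff_fderiv_apply (n := 1) (hf.of_le (by norm_num)) e
  have hg1 : ∀ e : E, ContDiff ℝ 1 (fun y => fderiv ℝ g y e) := fun e =>
    contDiff_fderiv_apply (n := 1) (hg.of_le (by norm_num)) e
  have hf2 : ∀ e : E, Continuous (fun y => fderiv ℝ (fun z => fderiv ℝ f z e) y e) := fun e =>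
    (contDiff_fderiv_apply (n := 0) ((hf1 e).of_le (by norm_num)) e).continuous
  have hg2 : ∀ e : E, Continuous (fun y => fderiv ℝ (fun z => fderiv ℝ g z e) y e) := fun e =>
    (contDiff_fderiv_apply (n := 0) ((hg1 e).of_le (by norm_num)) e).continuous
  have hcf1 : ∀ e : E, HasCompactSupport (fun y => fderiv ℝ f y e) := fun e =>
    hcs_fderiv_apply hcf e
  have hcf2 : ∀ e : E, HasCompactSupport (fun y => fderiv ℝ (fun z => fderiv ℝ f z e) y e) :=
    fun e => hcs_fderiv_apply (hcf1 e) e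
  have key : ∀ i : Fin N,
      ∫ x, f x * fderiv ℝ (fun y => fderiv ℝ g y (EuclideanSpace.single i 1)) x
          (EuclideanSpace.single i 1)
        = ∫ x, fderiv ℝ (fun y => fderiv ℝ f y (EuclideanSpace.single i 1)) x
          (EuclideanSpace.single i 1) * g x := by
    intro i
    set e := (EuclideanSpace.single i 1 : E) with he
    have step1 : ∫ x, f x * fderiv ℝ (fun y => fderiv ℝ g y e) x e
        = - ∫ x, fderiv ℝ f x e * (fun y => fderiv ℝ g y e) x := by
      apply integral_mul_fderiv_eq_neg_fderiv_mul_of_integrable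
      · exact (((hf1 e).continuous.mul (hg1 e).continuous).integrable_of_hasCompactSupport
          ((hcf1 e).mul_right))
      · exact ((hf.continuous.mul (hg2 e)).integrable_of_hasCompactSupport hcf.mul_right)
      · exact ((hf.continuous.mul (hg1 e).continuous).integrable_of_hasCompactSupport
          hcf.mul_right)
      · exact fun x _ => hf.differentiable (by norm_num) x
      · exact fun x _ => (hg1 e).differentiable one_ne_zero x
    have step2 : ∫ x, (fun y => fderiv ℝ f y e) x * fderiv ℝ g x e
        = - ∫ x, fderiv ℝ (fun y => fderiv ℝ f y e) x e * g x := by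
      apply integral_mul_fderiv_eq_neg_fderiv_mul_of_integrable
      · exact (((hf2 e).mul hg.continuous).integrable_of_hasCompactSupport
          ((hcf2 e).mul_right))
      · exact (((hf1 e).continuous.mul (hg1 e).continuous).integrable_of_hasCompactSupport
          ((hcf1 e).mul_right))
      · exact (((hf1 e).continuous.mul hg.continuous).integrable_of_hasCompactSupport
          ((hcf1 e).mul_right))
      · exact fun x _ => (hf1 e).differentiable one_ne_zero x
      · exact fun x _ => hg.differentiable (by norm_num) x
    simp only at step1 step2
    rw [step1, step2, neg_neg]
  calc ∫ x, f x * lap g x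
      = ∫ x, ∑ i : Fin N, f x * fderiv ℝ (fun y => fderiv ℝ g y (EuclideanSpace.single i 1)) x
          (EuclideanSpace.single i 1) := by
        unfold lap; simp_rw [Finset.mul_sum]
    _ = ∑ i : Fin N, ∫ x, f x * fderiv ℝ (fun y => fderiv ℝ g y (EuclideanSpace.single i 1)) x
          (EuclideanSpace.single i 1) := by
        apply integral_finset_sum _ fun i _ => ?_
        exact (hf.continuous.mul (hg2 _)).integrable_of_hasCompactSupport hcf.mul_right
    _ = ∑ i : Fin N, ∫ x, fderiv ℝ (fun y => fderiv ℝ f y (EuclideanSpace.single i 1)) x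
          (EuclideanSpace.single i 1) * g x := by simp_rw [key]
    _ = ∫ x, ∑ i : Fin N, fderiv ℝ (fun y => fderiv ℝ f y (EuclideanSpace.single i 1)) x
          (EuclideanSpace.single i 1) * g x := by
        refine (integral_finset_sum _ fun i _ => ?_).symm
        exact ((hf2 _).mul hg.continuous).integrable_of_hasCompactSupport ((hcf2 _).mul_right)
    _ = ∫ x, lap f x * g x := by unfold lap; simp_rw [Finset.sum_mul]

/-- second directional derivative of `γ² / φ` at a point where `φ > 0`. -/
private lemma D2_quot {Ω : Set E} (hΩ : IsOpen Ω) {γ φ : E → ℝ} (hγ : ContDiff ℝ 2 γ)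
    (hφ : ContDiffOn ℝ (⊤ : ℕ∞) φ Ω) (hφ0 : ∀ y ∈ Ω, 0 < φ y) {x : E} (hx : x ∈ Ω) (e : E) :
    fderiv ℝ (fun y => fderiv ℝ (fun z => γ z ^ 2 * (φ z)⁻¹) y e) x e =
      2 * (fderiv ℝ γ x e) ^ 2 * (φ x)⁻¹
      + 2 * γ x * (fderiv ℝ (fun y => fderiv ℝ γ y e) x e) * (φ x)⁻¹
      - 4 * γ x * (fderiv ℝ γ x e) * (fderiv ℝ φ x e) * (φ x)⁻¹ ^ 2
      + 2 * γ x ^ 2 * (fderiv ℝ φ x e) ^ 2 * (φ x)⁻¹ ^ 3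
      - γ x ^ 2 * (fderiv ℝ (fun y => fderiv ℝ φ y e) x e) * (φ x)⁻¹ ^ 2 := by
  have hγd : ∀ y : E, DifferentiableAt ℝ γ y := fun y =>
    (hγ.differentiable (by norm_num)) y
  have hφd : ∀ y ∈ Ω, DifferentiableAt ℝ φ y := fun y hy =>
    (hφ.contDiffAt (hΩ.mem_nhds hy)).differentiableAt (by simp)
  have hev : (fun y => fderiv ℝ (fun z => γ z ^ 2 * (φ z)⁻¹) y e) =ᶠ[𝓝 x]
      (fun y => 2 * γ y * (fderiv ℝ γ y e) * (φ y)⁻¹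
        - γ y ^ 2 * (fderiv ℝ φ y e) * (φ y)⁻¹ ^ 2) := by
    filter_upwards [hΩ.mem_nhds hx] with y hy
    have hφy : HasFDerivAt φ (fderiv ℝ φ y) y := (hφd y hy).hasFDerivAt
    have hγy : HasFDerivAt γ (fderiv ℝ γ y) y := (hγd y).hasFDerivAt
    have hφne : φ y ≠ 0 := ne_of_gt (hφ0 y hy)
    have hinv : HasFDerivAt (fun z => (φ z)⁻¹) ((-((φ y) ^ 2)⁻¹) • fderiv ℝ φ y) y :=
      (hasDerivAt_inv hφne).comp_hasFDerivAt y hφy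
    have hsq : HasFDerivAt (fun z => γ z * γ z)
        (γ y • fderiv ℝ γ y + γ y • fderiv ℝ γ y) y := hγy.mul hγy
    have hprod := hsq.mul hinv
    have hfun : (fun z => γ z ^ 2 * (φ z)⁻¹) = (fun z => (γ z * γ z) * (φ z)⁻¹) := by
      funext z; ring
    rw [hfun, (show HasFDerivAt (fun z => γ z * γ z * (φ z)⁻¹) _ y from hprod).fderiv]
    simp only [ContinuousLinearMap.add_apply, ContinuousLinearMap.coe_smul',
      Pi.smul_apply, smul_eq_mul]
    field_simp
    ring
  rw [hev.fderiv_eq]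
  have hγx : HasFDerivAt γ (fderiv ℝ γ x) x := (hγd x).hasFDerivAt
  have hφx : HasFDerivAt φ (fderiv ℝ φ x) x := ((hφd x hx)).hasFDerivAt
  have hγ1 : HasFDerivAt (fun y => fderiv ℝ γ y e)
      (fderiv ℝ (fun y => fderiv ℝ γ y e) x) x := by
    have : ContDiff ℝ 1 (fun y => fderiv ℝ γ y e) :=
      contDiff_fderiv_apply (n := 1) (hγ.of_le (by norm_num)) e
    exact ((this.differentiable one_ne_zero) x).hasFDerivAt
  have hφ1 : HasFDerivAt (fun y => fderiv ℝ φ y e)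
      (fderiv ℝ (fun y => fderiv ℝ φ y e) x) x := by
    have h := (contDiffOn_fderiv_apply hΩ hφ e).contDiffAt (hΩ.mem_nhds hx)
    exact (h.differentiableAt (by simp)).hasFDerivAt
  have hφne : φ x ≠ 0 := ne_of_gt (hφ0 x hx)
  have hinvx : HasFDerivAt (fun z => (φ z)⁻¹) ((-((φ x) ^ 2)⁻¹) • fderiv ℝ φ x) x :=
    (hasDerivAt_inv hφne).comp_hasFDerivAt x hφx
  have ht1 := ((hγx.const_mul (2:ℝ)).mul hγ1).mul hinvx
  have hsqx : HasFDerivAt (fun z => γ z * γ z)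
      (γ x • fderiv ℝ γ x + γ x • fderiv ℝ γ x) x := hγx.mul hγx
  have hinv2x : HasFDerivAt (fun z => (φ z)⁻¹ * (φ z)⁻¹)
      ((φ x)⁻¹ • ((-((φ x) ^ 2)⁻¹) • fderiv ℝ φ x)
        + (φ x)⁻¹ • ((-((φ x) ^ 2)⁻¹) • fderiv ℝ φ x)) x := hinvx.mul hinvx
  have ht2 := (hsqx.mul hφ1).mul hinv2x
  have hfun2 : (fun y => 2 * γ y * (fderiv ℝ γ y e) * (φ y)⁻¹
        - γ y ^ 2 * (fderiv ℝ φ y e) * (φ y)⁻¹ ^ 2)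
      = (fun y => (2 * γ y * (fderiv ℝ γ y e)) * (φ y)⁻¹
        - ((γ y * γ y) * (fderiv ℝ φ y e)) * ((φ y)⁻¹ * (φ y)⁻¹)) := by
    funext z; ring
  rw [hfun2, (show HasFDerivAt (fun y => 2 * γ y * (fderiv ℝ γ y e) * (φ y)⁻¹
    - γ y * γ y * (fderiv ℝ φ y e) * ((φ y)⁻¹ * (φ y)⁻¹)) _ x from ht1.sub ht2).fderiv]
  simp only [ContinuousLinearMap.coe_sub', Pi.sub_apply, Pi.mul_apply, ContinuousLinearMap.add_apply,
    ContinuousLinearMap.coe_smul', Pi.smul_apply, smul_eq_mul]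
  field_simp
  ring

private lemma alg_aux {A B C g t : ℝ} (hA : 0 ≤ A) (hC : 0 ≤ C) (hB : B ^ 2 ≤ A * C) :
    0 ≤ A - 2 * g * B * t + g ^ 2 * C * t ^ 2 := by
  rcases eq_or_lt_of_le hA with h | h
  · have hB0 : B = 0 := by nlinarith [sq_nonneg B]
    rw [← h, hB0]
    have : (0:ℝ) - 2 * g * 0 * t + g ^ 2 * C * t ^ 2 = g ^ 2 * C * t ^ 2 := by ring
    rw [this]; positivity
  · nlinarith [sq_nonneg (A - g * B * t), mul_nonneg (sq_nonneg (g * t)) (sub_nonneg.2 hB)]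

private lemma alg {A B C g s t c q : ℝ} (hA : 0 ≤ A) (hC : 0 ≤ C) (hB : B ^ 2 ≤ A * C)
    (hc : 0 < c) (hq : q < 0) (ht : 0 ≤ t) :
    (2 * A * t + 2 * g * s * t - 4 * g * B * t ^ 2 + 2 * g ^ 2 * C * t ^ 3
      - g ^ 2 * q * t ^ 2) * (c * q) ≤ c * s ^ 2 := by
  have h1 : 0 ≤ c * (s - q * g * t) ^ 2 := by positivity
  have hbr := alg_aux hA hC hB (g := g) (t := t)
  have h2 : (2 * A * t - 4 * g * B * t ^ 2 + 2 * g ^ 2 * C * t ^ 3) * (c * q) ≤ 0 := by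
    have he : (2 * A * t - 4 * g * B * t ^ 2 + 2 * g ^ 2 * C * t ^ 3)
        = 2 * t * (A - 2 * g * B * t + g ^ 2 * C * t ^ 2) := by ring
    rw [he]
    apply mul_nonpos_of_nonneg_of_nonpos
    · positivity
    · exact mul_nonpos_of_nonneg_of_nonpos hc.le hq.le
  nlinarith [h1, h2]


private lemma pointwise_ineq {n : ℕ} (G P Sγ Q : Fin n → ℝ) (g fx c : ℝ)
    (hc : 0 < c) (hfx : 0 < fx) (hq : ∑ i : Fin n, Q i < 0) :
    (∑ i : Fin n, (2 * (G i) ^ 2 * fx⁻¹ + 2 * g * (Sγ i) * fx⁻¹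
        - 4 * g * (G i) * (P i) * fx⁻¹ ^ 2 + 2 * g ^ 2 * (P i) ^ 2 * fx⁻¹ ^ 3
        - g ^ 2 * (Q i) * fx⁻¹ ^ 2)) * (c * (∑ i : Fin n, Q i))
      ≤ c * (∑ i : Fin n, Sγ i) ^ 2 := by
  set t : ℝ := fx⁻¹ with ht
  have hexp : ∑ i : Fin n, (2 * (G i) ^ 2 * t + 2 * g * (Sγ i) * t
      - 4 * g * (G i) * (P i) * t ^ 2 + 2 * g ^ 2 * (P i) ^ 2 * t ^ 3
      - g ^ 2 * (Q i) * t ^ 2)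
      = 2 * (∑ i : Fin n, (G i) ^ 2) * t + 2 * g * (∑ i : Fin n, Sγ i) * t
        - 4 * g * (∑ i : Fin n, G i * P i) * t ^ 2
        + 2 * g ^ 2 * (∑ i : Fin n, (P i) ^ 2) * t ^ 3
        - g ^ 2 * (∑ i : Fin n, Q i) * t ^ 2 := by
    rw [Finset.mul_sum, Finset.mul_sum, Finset.mul_sum, Finset.mul_sum, Finset.mul_sum,
      Finset.sum_mul, Finset.sum_mul, Finset.sum_mul, Finset.sum_mul, Finset.sum_mul,
      ← Finset.sum_add_distrib, ← Finset.sum_sub_distrib, ← Finset.sum_add_distrib,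
      ← Finset.sum_sub_distrib]
    exact Finset.sum_congr rfl fun i _ => by ring
  rw [hexp]
  exact alg (Finset.sum_nonneg fun i _ => sq_nonneg _)
    (Finset.sum_nonneg fun i _ => sq_nonneg _)
    (Finset.sum_mul_sq_le_sq_mul_sq Finset.univ G P) hc hq (inv_nonneg.2 hfx.le)

private lemma cutoff_exists {Ω K : Set E} (hΩ : IsOpen Ω) (hK : IsCompact K) (hKΩ : K ⊆ Ω) :
    ∃ χ : E → ℝ, ContDiff ℝ (⊤:ℕ∞) χ ∧ HasCompactSupport χ ∧ tsupport χ ⊆ Ω ∧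
      ∃ U : Set E, IsOpen U ∧ K ⊆ U ∧ ∀ x ∈ U, χ x = 1 := by
  obtain ⟨L, hL, hKL, hLΩ⟩ := exists_compact_between hK hΩ hKΩ
  obtain ⟨f, hf1, hf0, -⟩ :=
    exists_contMDiffMap_one_nhds_of_subset_interior (I := 𝓘(ℝ, E)) (n := (⊤:ℕ∞)) (s := K) (t := L)
      hK.isClosed hKL
  obtain ⟨U, hUopen, hKU, hU1⟩ := eventually_nhdsSet_iff_exists.mp hf1
  refine ⟨f, ?_, ?_, ?_, U, hUopen, hKU, hU1⟩
  · exact f.contMDiff.contDiff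
  · exact HasCompactSupport.intro hL fun x hx => hf0 x hx
  · have hsub : Function.support (f : E → ℝ) ⊆ L := fun x hx => by
      by_contra h
      exact hx (hf0 x h)
    exact (closure_minimal hsub hL.isClosed).trans hLΩ

end Aux

theorem stmt_15 (N : ℕ) (p θ : ℝ) (hp : 0 < p) (hθ : 0 < θ)
    (Ω : Set (EuclideanSpace ℝ (Fin N))) (hΩ : IsOpen Ω)
    (u v φ : EuclideanSpace ℝ (Fin N) → ℝ)
    (hu : ContDiffOn ℝ (⊤ : ℕ∞) u Ω) (hv : ContDiffOn ℝ (⊤ : ℕ∞) v Ω) (hφ : ContDiffOn ℝ (⊤ : ℕ∞) φ Ω)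
    (hu0 : ∀ x ∈ Ω, 0 < u x) (hv0 : ∀ x ∈ Ω, 0 < v x) (hφ0 : ∀ x ∈ Ω, 0 < φ x)
    (hΔφ : ∀ x ∈ Ω, lap φ x < 0)
    (heq : ∀ x ∈ Ω,
      θ * u x ^ (θ - 1) * φ x = lap (fun y => (1 / p) * v y ^ (1 - p) * lap φ y) x) :
    ∀ γ : EuclideanSpace ℝ (Fin N) → ℝ,
      ContDiff ℝ 2 γ → HasCompactSupport γ → tsupport γ ⊆ Ω →
      θ * ∫ x in Ω, u x ^ (θ - 1) * γ x ^ 2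
        ≤ (1 / p) * ∫ x in Ω, v x ^ (1 - p) * lap γ x ^ 2 := by
  intro γ hγ hcγ hγΩ
  classical
  obtain ⟨χ, hχs, hχc, hχΩ, U, hUopen, hKU, hχ1⟩ := cutoff_exists hΩ hcγ hγΩ
  set W₀ : EuclideanSpace ℝ (Fin N) → ℝ := fun y => (1 / p) * v y ^ (1 - p) * lap φ y
    with hW₀def
  set w : EuclideanSpace ℝ (Fin N) → ℝ := fun y => χ y * W₀ y with hwdef
  set a : EuclideanSpace ℝ (Fin N) → ℝ := fun z => γ z ^ 2 * (φ z)⁻¹ with hadef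
  set R : EuclideanSpace ℝ (Fin N) → ℝ := fun x => (1 / p) * (v x ^ (1 - p) * lap γ x ^ 2)
    with hRdef
  have hγzero : ∀ x ∉ tsupport γ, γ x = 0 := fun x hx =>
    image_eq_zero_of_notMem_tsupport hx
  have hazero : ∀ x ∉ tsupport γ, a x = 0 := fun x hx => by
    simp [hadef, hγzero x hx]
  have htsa : tsupport a ⊆ tsupport γ :=
    closure_minimal (fun x hx => by
      by_contra h
      exact hx (hazero x h)) (isClosed_tsupport γ)
  have hwzero : ∀ x ∉ tsupport χ, w x = 0 := fun x hx => by
    simp [hwdef, image_eq_zero_of_notMem_tsupport hx]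
  have hWΩ : ContDiffOn ℝ (⊤ : ℕ∞) W₀ Ω := by
    apply ContDiffOn.mul _ (contDiffOn_lap hΩ hφ)
    apply ContDiffOn.mul contDiffOn_const
    intro x hx
    exact ((hv.contDiffAt (hΩ.mem_nhds hx)).rpow_const_of_ne
      (ne_of_gt (hv0 x hx))).contDiffWithinAt
  have hwC : ContDiff ℝ 2 w := by
    rw [contDiff_iff_contDiffAt]
    intro x
    by_cases hx : x ∈ Ω
    · exact ((hχs.contDiffAt).of_le (WithTop.coe_le_coe.mpr le_top)).mul
        (((hWΩ.contDiffAt (hΩ.mem_nhds hx))).of_le (by exact_mod_cast le_top))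
    · have hev : w =ᶠ[nhds x] (fun _ => (0:ℝ)) := by
        filter_upwards [(isClosed_tsupport χ).isOpen_compl.mem_nhds
          (fun h => hx (hχΩ h))] with y hy
        exact hwzero y hy
      exact (contDiffAt_const (c := (0:ℝ))).congr_of_eventuallyEq hev
  have haC : ContDiff ℝ 2 a := by
    rw [contDiff_iff_contDiffAt]
    intro x
    by_cases hx : x ∈ Ω
    · exact (hγ.contDiffAt.pow 2).mul
        (((hφ.contDiffAt (hΩ.mem_nhds hx)).inv (ne_of_gt (hφ0 x hx))).of_le (by exact WithTop.coe_le_coe.mpr (le_top : (2:ℕ∞) ≤ ⊤)))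
    · have hev : a =ᶠ[nhds x] (fun _ => (0:ℝ)) := by
        filter_upwards [(isClosed_tsupport γ).isOpen_compl.mem_nhds
          (fun h => hx (hγΩ h))] with y hy
        exact hazero y hy
      exact (contDiffAt_const (c := (0:ℝ))).congr_of_eventuallyEq hev
  have haCS : HasCompactSupport a :=
    HasCompactSupport.intro hcγ fun x hx => hazero x hx
  have hwCS : HasCompactSupport w :=
    HasCompactSupport.intro hχc fun x hx => hwzero x hx
  have hlapa_cont : Continuous (lap a) := continuous_lap haC
  have hw_cont : Continuous w := hwC.continuous
  have key : ∀ x ∈ Ω, lap a x * w x ≤ R x := by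
    intro x hx
    have hrpow : (0:ℝ) < v x ^ (1 - p) := Real.rpow_pos_of_pos (hv0 x hx) _
    have hRnn : 0 ≤ R x := by
      rw [hRdef]
      exact mul_nonneg (by positivity) (mul_nonneg hrpow.le (sq_nonneg _))
    by_cases hxK : x ∈ tsupport γ
    · have hxU : x ∈ U := hKU hxK
      have hwx : w x = (1 / p) * v x ^ (1 - p) * lap φ x := by
        simp [hwdef, hχ1 x hxU, hW₀def]
      have hlapa : lap a x = ∑ i : Fin N,
          (2 * (fderiv ℝ γ x (EuclideanSpace.single i 1)) ^ 2 * (φ x)⁻¹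
            + 2 * γ x * (fderiv ℝ (fun y => fderiv ℝ γ y (EuclideanSpace.single i 1)) x
                (EuclideanSpace.single i 1)) * (φ x)⁻¹
            - 4 * γ x * (fderiv ℝ γ x (EuclideanSpace.single i 1))
                * (fderiv ℝ φ x (EuclideanSpace.single i 1)) * (φ x)⁻¹ ^ 2
            + 2 * γ x ^ 2 * (fderiv ℝ φ x (EuclideanSpace.single i 1)) ^ 2 * (φ x)⁻¹ ^ 3
            - γ x ^ 2 * (fderiv ℝ (fun y => fderiv ℝ φ y (EuclideanSpace.single i 1)) x
                (EuclideanSpace.single i 1)) * (φ x)⁻¹ ^ 2) := by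
        rw [hadef]
        unfold lap
        exact Finset.sum_congr rfl fun i _ =>
          D2_quot hΩ hγ hφ hφ0 hx (EuclideanSpace.single i 1)
      have hlapφ : lap φ x = ∑ i : Fin N,
          fderiv ℝ (fun y => fderiv ℝ φ y (EuclideanSpace.single i 1)) x
            (EuclideanSpace.single i 1) := rfl
      have hlapγ : lap γ x = ∑ i : Fin N,
          fderiv ℝ (fun y => fderiv ℝ γ y (EuclideanSpace.single i 1)) x
            (EuclideanSpace.single i 1) := rfl
      have hcpos : (0:ℝ) < (1 / p) * v x ^ (1 - p) := mul_pos (by positivity) hrpow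
      have hqneg : (∑ i : Fin N,
          fderiv ℝ (fun y => fderiv ℝ φ y (EuclideanSpace.single i 1)) x
            (EuclideanSpace.single i 1)) < 0 := by
        rw [← hlapφ]; exact hΔφ x hx
      have halg := pointwise_ineq
        (fun i => fderiv ℝ γ x (EuclideanSpace.single i 1))
        (fun i => fderiv ℝ φ x (EuclideanSpace.single i 1))
        (fun i => fderiv ℝ (fun y => fderiv ℝ γ y (EuclideanSpace.single i 1)) x
          (EuclideanSpace.single i 1))
        (fun i => fderiv ℝ (fun y => fderiv ℝ φ y (EuclideanSpace.single i 1)) x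
          (EuclideanSpace.single i 1))
        (γ x) (φ x) ((1 / p) * v x ^ (1 - p)) hcpos (hφ0 x hx) hqneg
      calc lap a x * w x
          = (∑ i : Fin N,
              (2 * (fderiv ℝ γ x (EuclideanSpace.single i 1)) ^ 2 * (φ x)⁻¹
                + 2 * γ x * (fderiv ℝ (fun y => fderiv ℝ γ y (EuclideanSpace.single i 1)) x
                    (EuclideanSpace.single i 1)) * (φ x)⁻¹
                - 4 * γ x * (fderiv ℝ γ x (EuclideanSpace.single i 1))
                    * (fderiv ℝ φ x (EuclideanSpace.single i 1)) * (φ x)⁻¹ ^ 2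
                + 2 * γ x ^ 2 * (fderiv ℝ φ x (EuclideanSpace.single i 1)) ^ 2 * (φ x)⁻¹ ^ 3
                - γ x ^ 2 * (fderiv ℝ (fun y => fderiv ℝ φ y (EuclideanSpace.single i 1)) x
                    (EuclideanSpace.single i 1)) * (φ x)⁻¹ ^ 2))
            * (((1 / p) * v x ^ (1 - p)) * (∑ i : Fin N,
              fderiv ℝ (fun y => fderiv ℝ φ y (EuclideanSpace.single i 1)) x
                (EuclideanSpace.single i 1))) := by
            rw [hlapa, hwx, hlapφ]
        _ ≤ ((1 / p) * v x ^ (1 - p)) * (∑ i : Fin N,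
              fderiv ℝ (fun y => fderiv ℝ γ y (EuclideanSpace.single i 1)) x
                (EuclideanSpace.single i 1)) ^ 2 := halg
        _ = R x := by
            rw [hRdef]
            simp only
            rw [hlapγ]
            ring
    · have h0 : lap a x = 0 := lap_eq_zero_of_nmem fun h => hxK (htsa h)
      rw [h0, zero_mul]
      exact hRnn
  have int1 : IntegrableOn (fun x => lap a x * w x) Ω volume := by
    apply Integrable.integrableOn
    exact (hlapa_cont.mul hw_cont).integrable_of_hasCompactSupport hwCS.mul_left
  have int2 : IntegrableOn R Ω volume := by
    have hRcont : ContinuousOn R Ω := by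
      rw [hRdef]
      apply ContinuousOn.mul continuousOn_const
      apply ContinuousOn.mul
      · exact hv.continuousOn.rpow_const fun x hx => Or.inl (ne_of_gt (hv0 x hx))
      · exact ((continuous_lap hγ).pow 2).continuousOn
    have i1 : IntegrableOn R (tsupport γ) volume :=
      (hRcont.mono hγΩ).integrableOn_compact hcγ
    have i2 : IntegrableOn R (Ω \ tsupport γ) volume := by
      apply (integrableOn_zero (ε' := ℝ)).congr_fun
      · intro x hx
        have h0 : lap γ x = 0 := lap_eq_zero_of_nmem hx.2
        simp [hRdef, h0]
      · exact hΩ.measurableSet.diff (isClosed_tsupport γ).measurableSet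
    exact (i1.union i2).mono_set fun x hx => by
      by_cases h : x ∈ tsupport γ
      · exact Set.mem_union_left _ h
      · exact Set.mem_union_right _ ⟨hx, h⟩
  calc θ * ∫ x in Ω, u x ^ (θ - 1) * γ x ^ 2
      = ∫ x in Ω, θ * (u x ^ (θ - 1) * γ x ^ 2) := (integral_const_mul θ _).symm
    _ = ∫ x in Ω, a x * lap W₀ x := by
        apply setIntegral_congr_fun hΩ.measurableSet
        intro x hx
        have h1 := heq x hx
        have hφne : φ x ≠ 0 := ne_of_gt (hφ0 x hx)
        rw [hadef]
        simp only
        rw [← h1]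
        field_simp
    _ = ∫ x in Ω, a x * lap w x := by
        apply setIntegral_congr_fun hΩ.measurableSet
        intro x _
        show a x * lap W₀ x = a x * lap w x
        by_cases hxU : x ∈ U
        · have hev : W₀ =ᶠ[nhds x] w := by
            filter_upwards [hUopen.mem_nhds hxU] with y hy
            simp [hwdef, hχ1 y hy]
          rw [lap_congr hev]
        · have hxK : x ∉ tsupport γ := fun h => hxU (hKU h)
          rw [hazero x hxK, zero_mul, zero_mul]
    _ = ∫ x, a x * lap w x := by
        apply setIntegral_eq_integral_of_forall_compl_eq_zero
        intro x hx
        rw [hazero x fun h => hx (hγΩ h), zero_mul]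
    _ = ∫ x, lap a x * w x := green haC hwC haCS
    _ = ∫ x in Ω, lap a x * w x := by
        refine (setIntegral_eq_integral_of_forall_compl_eq_zero fun x hx => ?_).symm
        rw [hwzero x fun h => hx (hχΩ h), mul_zero]
    _ ≤ ∫ x in Ω, R x := setIntegral_mono_on int1 int2 hΩ.measurableSet key
    _ = (1 / p) * ∫ x in Ω, v x ^ (1 - p) * lap γ x ^ 2 := by
        rw [hRdef]
        exact integral_const_mul _ _
end
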